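/- (Closure under conditioning.) Let P be a finite probability space on an alphabet Ω, and let B ⊆ Ω be an event with P(B) > 0. For every Martin-Löf P-random infinite sequence α over Ω, the infinite sequence α|B over B obtained from α by eliminating all elements of Ω∖B occurring in α (which is well-defined since α contains infinitely many elements of B) is Martin-Löf P_B-random, where P_B is the finite probability space on B defined by P_B(a) = P(a)/P(B) for every a ∈ B. -/

import Mathlib

/-!
If `α` had only finitely many letters in `B`, it would be caught by the `P`-test whose `n`-th
level consists of the strings in which, from some position `N` on, the next `(n + N + 2) K`
letters avoid `B`, where `P(Ω ∖ B) ^ K ≤ 1/2`: by the union bound over `N` this level has measure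
at most `∑_N 2^{-(n+N+2)} < 2^{-n}`.

A `P_B`-test `C` pulls back to the `P`-test `{(n, l) | (n, l|B) ∈ C}`. Deleting the letters
outside `B` commutes with taking prefixes, and under `λ_P` the next letter kept is distributed
according to `P_B`, so the `n`-th level of the pull-back has `P`-measure at most `λ_{P_B}([C_n])`;
and `α|B ∈ [C_n]` forces `α` into that level.
-/

open scoped BigOperators

namespace Paper

/-- The measure `λ_P([S])` of the open set generated by a set `S` of strings over `Ω`:
the supremum over `n` of the `P`-weight of all length-`n` strings extending some string in `S`. -/
noncomputable def cylMeasure {Ω : Type*} [Fintype Ω] (P : Ω → ℝ) (S : Set (List Ω)) : ℝ :=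
  ⨆ n : ℕ, ∑ τ : Fin n → Ω,
    Set.indicator {τ : Fin n → Ω | ∃ σ ∈ S, σ <+: List.ofFn τ} (fun τ => ∏ i, P (τ i)) τ

/-- The prefix of length `n` of the infinite sequence `α`. -/
def seqPrefix {Ω : Type*} (α : ℕ → Ω) (n : ℕ) : List Ω := List.ofFn fun i : Fin n => α i

/-- `α` belongs to the open set `[S]` generated by the set of strings `S`. -/
def inOpen {Ω : Type*} (S : Set (List Ω)) (α : ℕ → Ω) : Prop :=
  ∃ σ ∈ S, seqPrefix α σ.length = σ

/-- `P` is a finite probability space on the alphabet `Ω`. -/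
def IsFPS {Ω : Type*} [Fintype Ω] (P : Ω → ℝ) : Prop :=
  (∀ a, 0 ≤ P a) ∧ ∑ a, P a = 1

/-- `C ⊆ ℕ × Ω*` is recursively enumerable (under a canonical encoding of the
finite alphabet `Ω` by an initial segment of `ℕ`). -/
def REset {Ω : Type*} [Fintype Ω] (C : Set (ℕ × List Ω)) : Prop :=
  ∃ e : Ω ≃ Fin (Fintype.card Ω),
    REPred fun p : ℕ × List (Fin (Fintype.card Ω)) => (p.1, p.2.map e.symm) ∈ C

/-- A Martin-Löf `P`-test. -/
def MLTest {Ω : Type*} [Fintype Ω] (P : Ω → ℝ) (C : Set (ℕ × List Ω)) : Prop :=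
  REset C ∧ ∀ n : ℕ, 0 < n → cylMeasure P {σ | (n, σ) ∈ C} < (2 : ℝ)⁻¹ ^ n

/-- `α` is Martin-Löf `P`-random. -/
def MLRandom {Ω : Type*} [Fintype Ω] (P : Ω → ℝ) (α : ℕ → Ω) : Prop :=
  ∀ C : Set (ℕ × List Ω), MLTest P C → ∃ n : ℕ, 0 < n ∧ ¬ inOpen {σ | (n, σ) ∈ C} α
/-- The conditional sequence `α|B`: the sequence over `B` of the values of `α` at the
positions where `α` takes a value in `B` (in increasing order of positions). When
`{n | α n ∈ B}` is infinite this is exactly the sequence obtained from `α` by eliminating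
all elements of `Ω ∖ B`. -/
noncomputable def condSeq {Ω : Type*} [DecidableEq Ω] (α : ℕ → Ω) (B : Finset Ω) (hB : B.Nonempty) :
    ℕ → {x : Ω // x ∈ B} :=
  fun k =>
    if h : α (Nat.nth (fun m => α m ∈ B) k) ∈ B then ⟨_, h⟩
    else ⟨hB.choose, hB.choose_spec⟩

theorem _root_.REPred.comp {α β : Type*} [Primcodable α] [Primcodable β] {p : β → Prop}
    (hp : REPred p) {f : α → β} (hf : Computable f) : REPred fun a => p (f a) :=
  Partrec.comp hp hf

section Weight

variable {Ω : Type*}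

def extensions (S : Set (List Ω)) : Set (List Ω) := {l | ∃ σ ∈ S, σ <+: l}

def IsExtensionClosed (E : Set (List Ω)) : Prop := ∀ w ∈ E, ∀ b, w ++ [b] ∈ E

theorem isExtensionClosed_extensions (S : Set (List Ω)) : IsExtensionClosed (extensions S) :=
  fun _ ⟨σ, hσ, hpre⟩ _ => ⟨σ, hσ, hpre.trans (List.prefix_append _ _)⟩

theorem IsExtensionClosed.preimage_cons {E : Set (List Ω)} (hE : IsExtensionClosed E) (a : Ω) :
    IsExtensionClosed {w | a :: w ∈ E} :=
  fun w hw b => hE (a :: w) hw b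

theorem inOpen_of_seqPrefix_mem {S : Set (List Ω)} {α : ℕ → Ω} {L : ℕ}
    (h : seqPrefix α L ∈ S) : inOpen S α :=
  ⟨_, h, by simp [seqPrefix]⟩

theorem seqPrefix_succ (α : ℕ → Ω) (m : ℕ) : seqPrefix α (m + 1) = seqPrefix α m ++ [α m] := by
  simp only [seqPrefix, List.ofFn_succ', List.concat_eq_append, Fin.val_castSucc, Fin.val_last]

variable [Fintype Ω] {P : Ω → ℝ}

theorem IsFPS.sum_le_one (hP : IsFPS P) (B : Finset Ω) : ∑ a ∈ B, P a ≤ 1 :=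
  hP.2 ▸ Finset.sum_le_univ_sum_of_nonneg hP.1

theorem IsFPS.sum_compl [DecidableEq Ω] (hP : IsFPS P) (B : Finset Ω) :
    ∑ a ∈ Bᶜ, P a = 1 - ∑ a ∈ B, P a := by
  rw [← hP.2, ← Finset.sum_add_sum_compl B P, add_sub_cancel_left]

/-- `λ_P` of the union of the cylinders `[τ]` over the strings `τ ∈ E` of length `m`. -/
noncomputable def weight (P : Ω → ℝ) (m : ℕ) (E : Set (List Ω)) : ℝ :=
  ∑ τ : Fin m → Ω, Set.indicator {τ | List.ofFn τ ∈ E} (fun τ => ∏ i, P (τ i)) τ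

theorem cylMeasure_eq_iSup_weight (P : Ω → ℝ) (S : Set (List Ω)) :
    cylMeasure P S = ⨆ m, weight P m (extensions S) :=
  rfl

open Classical in
theorem weight_zero (E : Set (List Ω)) : weight P 0 E = if [] ∈ E then 1 else 0 := by
  rw [weight, Fintype.sum_unique]
  simp [Set.indicator_apply]

theorem weight_succ (m : ℕ) (E : Set (List Ω)) :
    weight P (m + 1) E = ∑ a, P a * weight P m {l | a :: l ∈ E} := by
  classical
  let cons := Fin.consEquiv fun _ : Fin (m + 1) => Ω
  rw [weight, ← cons.sum_comp, Fintype.sum_prod_type]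
  refine Finset.sum_congr rfl fun a _ => ?_
  rw [weight, Finset.mul_sum]
  refine Finset.sum_congr rfl fun τ _ => ?_
  have hofFn : List.ofFn (cons (a, τ)) = a :: List.ofFn τ := by
    simp [cons, Fin.consEquiv, List.ofFn_succ]
  have hprod : ∏ i, P (cons (a, τ) i) = P a * ∏ i, P (τ i) := by
    simp [cons, Fin.consEquiv, Fin.prod_univ_succ]
  simp only [Set.indicator_apply, Set.mem_ofPred_eq, hofFn, hprod]
  split_ifs <;> simp

theorem weight_empty (m : ℕ) : weight P m ∅ = 0 := by
  simp [weight]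

theorem weight_nonneg (h0 : ∀ a, 0 ≤ P a) (m : ℕ) (E : Set (List Ω)) : 0 ≤ weight P m E :=
  Finset.sum_nonneg fun τ _ =>
    Set.indicator_nonneg (fun τ _ => Finset.prod_nonneg fun i _ => h0 (τ i)) τ

theorem weight_mono (h0 : ∀ a, 0 ≤ P a) {m : ℕ} {E E' : Set (List Ω)}
    (h : ∀ l : List Ω, l.length = m → l ∈ E → l ∈ E') : weight P m E ≤ weight P m E' :=
  Finset.sum_le_sum fun τ _ =>
    Set.indicator_le_indicator_of_subset (s := {τ : Fin m → Ω | List.ofFn τ ∈ E})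
      (t := {τ | List.ofFn τ ∈ E'}) (fun _ hτ => h _ List.length_ofFn hτ)
      (fun τ => Finset.prod_nonneg fun i _ => h0 (τ i)) τ

theorem weight_biUnion_le (h0 : ∀ a, 0 ≤ P a) {ι : Type*} (m : ℕ) (s : Finset ι)
    (E : ι → Set (List Ω)) :
    weight P m {l | ∃ i ∈ s, l ∈ E i} ≤ ∑ i ∈ s, weight P m (E i) := by
  classical
  unfold weight
  rw [Finset.sum_comm]
  refine Finset.sum_le_sum fun τ _ => ?_
  have hterm (i : ι) : 0 ≤ Set.indicator {τ | List.ofFn τ ∈ E i} (fun τ => ∏ i, P (τ i)) τ :=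
    Set.indicator_nonneg (fun τ _ => Finset.prod_nonneg fun i _ => h0 (τ i)) τ
  rw [Set.indicator_apply]
  split_ifs with hτ
  · obtain ⟨i, hi, hτi⟩ := hτ
    calc _ = Set.indicator {τ | List.ofFn τ ∈ E i} (fun τ => ∏ i, P (τ i)) τ :=
          (Set.indicator_of_mem (show τ ∈ {τ | List.ofFn τ ∈ E i} from hτi) _).symm
      _ ≤ _ := Finset.single_le_sum (fun j _ => hterm j) hi
  · exact Finset.sum_nonneg fun i _ => hterm i

theorem weight_le_one (hP : IsFPS P) (m : ℕ) (E : Set (List Ω)) : weight P m E ≤ 1 := by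
  induction m generalizing E with
  | zero => rw [weight_zero]; split_ifs <;> norm_num
  | succ m ih =>
    rw [weight_succ, ← hP.2]
    exact Finset.sum_le_sum fun a _ => mul_le_of_le_one_right (hP.1 a) (ih _)

theorem weight_le_cylMeasure (hP : IsFPS P) (m : ℕ) (S : Set (List Ω)) :
    weight P m (extensions S) ≤ cylMeasure P S := by
  rw [cylMeasure_eq_iSup_weight]
  exact le_ciSup (f := fun m => weight P m (extensions S))
    ⟨1, by rintro _ ⟨k, rfl⟩; exact weight_le_one hP k _⟩ m

theorem cylMeasure_le {S : Set (List Ω)} {c : ℝ} (h : ∀ m, weight P m (extensions S) ≤ c) :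
    cylMeasure P S ≤ c := by
  rw [cylMeasure_eq_iSup_weight]
  exact ciSup_le h

theorem weight_le_weight_succ (hP : IsFPS P) {E : Set (List Ω)} (hE : IsExtensionClosed E)
    (m : ℕ) : weight P m E ≤ weight P (m + 1) E := by
  induction m generalizing E with
  | zero =>
    rw [weight_zero, weight_succ]
    split_ifs with hnil
    · calc (1 : ℝ) = ∑ a, P a := hP.2.symm
        _ ≤ ∑ a, P a * weight P 0 {w | a :: w ∈ E} := Finset.sum_le_sum fun a _ => by
            rw [weight_zero, if_pos (show [] ∈ {w | a :: w ∈ E} from hE [] hnil a), mul_one]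
    · exact Finset.sum_nonneg fun a _ => mul_nonneg (hP.1 a) (weight_nonneg hP.1 0 _)
  | succ m ih =>
    rw [weight_succ, weight_succ (m + 1)]
    exact Finset.sum_le_sum fun a _ =>
      mul_le_mul_of_nonneg_left (ih (hE.preimage_cons a)) (hP.1 a)

end Weight

section Avoiding

variable {Ω : Type*} (B : Finset Ω)

def avoiding (N M : ℕ) : Set (List Ω) :=
  {l | N + M ≤ l.length ∧ ∀ x ∈ (l.drop N).take M, x ∉ B}

variable {B}

theorem avoiding_of_prefix {N M : ℕ} {σ l : List Ω} (hσ : σ ∈ avoiding B N M) (h : σ <+: l) :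
    l ∈ avoiding B N M := by
  obtain ⟨t, rfl⟩ := h
  obtain ⟨hlen, hσ⟩ := hσ
  refine ⟨hlen.trans (by simp), ?_⟩
  rwa [List.drop_append_of_le_length (by omega),
    List.take_append_of_le_length (by simp; omega)]

theorem cons_mem_avoiding_succ (a : Ω) (l : List Ω) (N M : ℕ) :
    a :: l ∈ avoiding B (N + 1) M ↔ l ∈ avoiding B N M := by
  simp [avoiding, Nat.add_right_comm N 1 M]

theorem cons_mem_avoiding_zero_succ (a : Ω) (l : List Ω) (M : ℕ) :
    a :: l ∈ avoiding B 0 (M + 1) ↔ a ∉ B ∧ l ∈ avoiding B 0 M := by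
  simp [avoiding]
  tauto

variable [Fintype Ω] {P : Ω → ℝ}

theorem weight_avoiding_le (hP : IsFPS P) :
    ∀ m N M, weight P m (avoiding B N M) ≤ (1 - ∑ a ∈ B, P a) ^ M
  | m, _, 0 => by simpa using weight_le_one hP m _
  | 0, N, M + 1 => by
    rw [weight_zero, if_neg fun h => by simpa using h.1]
    exact pow_nonneg (sub_nonneg.2 (hP.sum_le_one B)) _
  | m + 1, N + 1, M => by
    calc weight P (m + 1) (avoiding B (N + 1) M)
        = ∑ a, P a * weight P m (avoiding B N M) := by
          simp only [weight_succ, cons_mem_avoiding_succ, Set.ofPred_mem_eq]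
      _ ≤ ∑ a, P a * (1 - ∑ a ∈ B, P a) ^ M := Finset.sum_le_sum fun a _ =>
          mul_le_mul_of_nonneg_left (weight_avoiding_le hP m N M) (hP.1 a)
      _ = (1 - ∑ a ∈ B, P a) ^ M := by rw [← Finset.sum_mul, hP.2, one_mul]
  | m + 1, 0, M + 1 => by
    classical
    calc weight P (m + 1) (avoiding B 0 (M + 1))
        = ∑ a ∈ Bᶜ, P a * weight P m (avoiding B 0 M) := by
          rw [weight_succ, ← Finset.sum_add_sum_compl B, Finset.sum_eq_zero, zero_add]
          · refine Finset.sum_congr rfl fun a ha => ?_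
            simp [cons_mem_avoiding_zero_succ, Finset.mem_compl.1 ha]
          · intro a ha
            simp [cons_mem_avoiding_zero_succ, ha, weight_empty]
      _ ≤ ∑ a ∈ Bᶜ, P a * (1 - ∑ a ∈ B, P a) ^ M := Finset.sum_le_sum fun a _ =>
          mul_le_mul_of_nonneg_left (weight_avoiding_le hP m 0 M) (hP.1 a)
      _ = (1 - ∑ a ∈ B, P a) ^ (M + 1) := by
          rw [← Finset.sum_mul, hP.sum_compl, pow_succ']

end Avoiding

section RunTest

variable {Ω : Type*} (B : Finset Ω) (K : ℕ)

/-- The bound on `N` follows from membership in `avoiding`; it is there to make the test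
decidable. -/
def runTest : Set (ℕ × List Ω) :=
  {q | ∃ N < q.2.length + 1, q.2 ∈ avoiding B N ((q.1 + N + 2) * K)}

theorem reSet_runTest [Fintype Ω] : REset (runTest B K) := by
  classical
  let e := Fintype.equivFin Ω
  refine ⟨e, ?_⟩
  let R : ℕ → ℕ × List (Fin (Fintype.card Ω)) → Prop := fun N q =>
    N + (q.1 + N + 2) * K ≤ q.2.length ∧
      ∀ i ∈ (q.2.drop N).take ((q.1 + N + 2) * K), e.symm i ∉ B
  have hM : Primrec₂ fun (N : ℕ) (q : ℕ × List (Fin (Fintype.card Ω))) => (q.1 + N + 2) * K :=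
    Primrec.nat_mul.comp (Primrec.nat_add.comp (Primrec.nat_add.comp (Primrec.fst.comp Primrec.snd)
      Primrec.fst) (Primrec.const 2)) (Primrec.const K)
  have hR : PrimrecRel R :=
    (Primrec.nat_le.comp (Primrec.nat_add.comp Primrec.fst hM)
      (Primrec.list_length.comp (Primrec.snd.comp Primrec.snd))).and
    ((Primrec.dom_finite fun i => decide (e.symm i ∉ B)).primrecPred.forall_mem_list.comp
      (Primrec.list_take.comp hM
        (Primrec.list_drop.comp Primrec.fst (Primrec.snd.comp Primrec.snd))))
  have hlen : Primrec fun q : ℕ × List (Fin (Fintype.card Ω)) => q.2.length + 1 :=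
    Primrec.succ.comp (Primrec.list_length.comp Primrec.snd)
  refine ((hR.exists_mem_list.comp (Primrec.list_range.comp hlen) Primrec.id).computablePred
    |>.to_re).of_eq fun q => ?_
  simp [R, runTest, avoiding, ← List.map_drop, ← List.map_take]

variable {B K}

theorem seqPrefix_mem_runTest {α : ℕ → Ω} {N : ℕ} (hN : ∀ i, N ≤ i → α i ∉ B) (n : ℕ) :
    (n, seqPrefix α (N + (n + N + 2) * K)) ∈ runTest B K := by
  refine ⟨N, by simp [seqPrefix], by simp [seqPrefix], ?_⟩
  intro x hx
  simp only [seqPrefix, List.mem_iff_getElem, List.getElem_take, List.getElem_drop,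
    List.getElem_ofFn] at hx
  obtain ⟨i, hi, rfl⟩ := hx
  exact hN _ (Nat.le_add_right N i)

variable [Fintype Ω] {P : Ω → ℝ}

theorem cylMeasure_runTest_le (hP : IsFPS P) (hK : (1 - ∑ a ∈ B, P a) ^ K ≤ 1 / 2) (n : ℕ) :
    cylMeasure P {σ | (n, σ) ∈ runTest B K} ≤ (1 / 2) ^ (n + 1) := by
  have hq : 0 ≤ 1 - ∑ a ∈ B, P a := sub_nonneg.2 (hP.sum_le_one B)
  refine cylMeasure_le fun m => ?_
  calc weight P m (extensions {σ | (n, σ) ∈ runTest B K})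
      ≤ weight P m {l | ∃ N ∈ Finset.range (m + 1), l ∈ avoiding B N ((n + N + 2) * K)} :=
        weight_mono hP.1 fun l hl ⟨σ, ⟨N, hN, hσ⟩, hpre⟩ =>
          have hNσ : N < σ.length + 1 := hN
          ⟨N, Finset.mem_range.2 (by have := hpre.length_le; omega), avoiding_of_prefix hσ hpre⟩
    _ ≤ ∑ N ∈ Finset.range (m + 1), weight P m (avoiding B N ((n + N + 2) * K)) :=
        weight_biUnion_le hP.1 _ _ _
    _ ≤ ∑ N ∈ Finset.range (m + 1), (1 / 2 : ℝ) ^ (n + N + 2) := Finset.sum_le_sum fun N _ =>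
        (weight_avoiding_le hP m N _).trans (by
          rw [pow_mul']; exact pow_le_pow_left₀ (pow_nonneg hq K) hK _)
    _ = (1 / 2) ^ (n + 2) * ∑ N ∈ Finset.range (m + 1), (1 / 2 : ℝ) ^ N := by
        rw [Finset.mul_sum]
        exact Finset.sum_congr rfl fun N _ => by ring
    _ ≤ (1 / 2) ^ (n + 2) * 2 := by gcongr; exact sum_geometric_two_le _
    _ = (1 / 2) ^ (n + 1) := by ring

theorem mlTest_runTest (hP : IsFPS P) (hK : (1 - ∑ a ∈ B, P a) ^ K ≤ 1 / 2) :
    MLTest P (runTest B K) := by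
  refine ⟨reSet_runTest B K, fun n _ => (cylMeasure_runTest_le hP hK n).trans_lt ?_⟩
  rw [one_div, pow_succ]
  exact mul_lt_of_lt_one_right (by positivity) (by norm_num)

theorem infinite_setOf_mem_of_mlRandom (hP : IsFPS P) (hB : 0 < ∑ a ∈ B, P a) {α : ℕ → Ω}
    (hα : MLRandom P α) : {n | α n ∈ B}.Infinite := by
  obtain ⟨K, hK⟩ := exists_pow_lt_of_lt_one (by norm_num : (0 : ℝ) < 1 / 2)
    (by linarith : 1 - ∑ a ∈ B, P a < 1)
  obtain ⟨n, -, hn⟩ := hα _ (mlTest_runTest (K := K) hP hK.le)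
  by_contra hfin
  obtain ⟨N, hN⟩ := (Set.not_infinite.mp hfin).bddAbove
  exact hn (inOpen_of_seqPrefix_mem (seqPrefix_mem_runTest (N := N + 1)
    (fun i hi hiB => by have := hN hiB; omega) n))

end RunTest

section Conditioning

variable {Ω : Type*} {P : Ω → ℝ} {B : Finset Ω}

noncomputable def condProb (P : Ω → ℝ) (B : Finset Ω) : {x // x ∈ B} → ℝ :=
  fun b => P b / ∑ a ∈ B, P a

theorem isFPS_condProb (h0 : ∀ a, 0 ≤ P a) (hB : 0 < ∑ a ∈ B, P a) : IsFPS (condProb P B) :=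
  ⟨fun b => div_nonneg (h0 b) hB.le, by
    simp only [condProb]
    rw [← Finset.sum_div, Finset.sum_coe_sort B P, div_self hB.ne']⟩

variable [DecidableEq Ω] (B)

/-- The string `l|B` of the paper. -/
def condList : List Ω → List {x // x ∈ B} :=
  List.filterMap fun a => if h : a ∈ B then some ⟨a, h⟩ else none

variable {B}

theorem condList_cons_of_mem (b : {x // x ∈ B}) (l : List Ω) :
    condList B (b :: l) = b :: condList B l := by
  simp [condList]

theorem condList_cons_of_not_mem {a : Ω} (ha : a ∉ B) (l : List Ω) :
    condList B (a :: l) = condList B l := by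
  simp [condList, ha]

theorem condList_seqPrefix (α : ℕ → Ω) (hB : B.Nonempty) (m : ℕ) :
    condList B (seqPrefix α m) = seqPrefix (condSeq α B hB) (Nat.count (fun i => α i ∈ B) m) := by
  induction m with
  | zero => rfl
  | succ m ih =>
    rw [seqPrefix_succ, condList, List.filterMap_append, ← condList, ih, Nat.count_succ]
    by_cases h : α m ∈ B
    · simp [h, condList, seqPrefix_succ, condSeq, Nat.nth_count (p := fun i => α i ∈ B) h]
    · simp [h, condList]

variable [Fintype Ω]

theorem weight_condList_le (hP : IsFPS P) (hB : 0 < ∑ a ∈ B, P a)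
    {E : Set (List {x // x ∈ B})} (hE : IsExtensionClosed E) (m : ℕ) :
    weight P m {l | condList B l ∈ E} ≤ weight (condProb P B) m E := by
  induction m generalizing E with
  | zero =>
    rw [weight_zero, weight_zero]
    exact le_rfl
  | succ m ih =>
    have hPB := isFPS_condProb hP.1 hB
    rw [weight_succ, ← Finset.sum_add_sum_compl B, ← Finset.sum_coe_sort B]
    simp only [Set.mem_ofPred_eq, condList_cons_of_mem]
    -- a letter outside `B` is deleted and only lengthens the string; a kept letter `b ∈ B` has
    -- `P b = P(B) · P_B b`
    calc _ ≤ ∑ b : {x // x ∈ B}, P b * weight (condProb P B) m {w | b :: w ∈ E} +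
          ∑ a ∈ Bᶜ, P a * weight (condProb P B) (m + 1) E := by
          refine add_le_add (Finset.sum_le_sum fun b _ => ?_) (Finset.sum_le_sum fun a ha => ?_)
          · exact mul_le_mul_of_nonneg_left (ih (hE.preimage_cons b)) (hP.1 b)
          · simp only [condList_cons_of_not_mem (Finset.mem_compl.1 ha)]
            exact mul_le_mul_of_nonneg_left ((ih hE).trans (weight_le_weight_succ hPB hE m))
              (hP.1 a)
      _ = (∑ a ∈ B, P a) * weight (condProb P B) (m + 1) E +
          (1 - ∑ a ∈ B, P a) * weight (condProb P B) (m + 1) E := by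
          rw [weight_succ (m := m), Finset.mul_sum, ← Finset.sum_mul, hP.sum_compl]
          congr 1
          refine Finset.sum_congr rfl fun b _ => ?_
          simp only [condProb]
          field_simp
      _ = weight (condProb P B) (m + 1) E := by ring

theorem REset.preimage_condList {C : Set (ℕ × List {x // x ∈ B})} (hC : REset C) :
    REset {q : ℕ × List Ω | (q.1, condList B q.2) ∈ C} := by
  obtain ⟨eB, hC⟩ := hC
  let e := Fintype.equivFin Ω
  refine ⟨e, ?_⟩
  let code : Fin (Fintype.card Ω) → Option (Fin (Fintype.card {x // x ∈ B})) :=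
    fun i => if h : e.symm i ∈ B then some (eB ⟨e.symm i, h⟩) else none
  have hcode : Primrec fun q : ℕ × List (Fin (Fintype.card Ω)) => (q.1, q.2.filterMap code) :=
    Primrec.fst.pair
      (Primrec.listFilterMap Primrec.snd ((Primrec.dom_finite code).comp Primrec.snd).to₂)
  refine (hC.comp hcode.to_comp).of_eq fun q => ?_
  simp only [Set.mem_ofPred_eq, condList, List.map_filterMap, List.filterMap_map]
  congr! 3 with i
  by_cases h : e.symm i ∈ B <;> simp [code, h]

theorem MLTest.preimage_condList (hP : IsFPS P) (hB : 0 < ∑ a ∈ B, P a)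
    {C : Set (ℕ × List {x // x ∈ B})} (hC : MLTest (condProb P B) C) :
    MLTest P {q | (q.1, condList B q.2) ∈ C} := by
  refine ⟨hC.1.preimage_condList, fun n hn => (cylMeasure_le fun m => ?_).trans_lt (hC.2 n hn)⟩
  calc weight P m (extensions {σ | (n, σ) ∈ {q : ℕ × List Ω | (q.1, condList B q.2) ∈ C}})
      ≤ weight P m {l | condList B l ∈ extensions {τ | (n, τ) ∈ C}} :=
        weight_mono hP.1 fun _ _ ⟨_, hσ, hpre⟩ => ⟨_, hσ, hpre.filterMap _⟩
    _ ≤ weight (condProb P B) m (extensions {τ | (n, τ) ∈ C}) :=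
        weight_condList_le hP hB (isExtensionClosed_extensions _) m
    _ ≤ cylMeasure (condProb P B) {τ | (n, τ) ∈ C} :=
        weight_le_cylMeasure (isFPS_condProb hP.1 hB) m _

theorem mlRandom_condSeq (hP : IsFPS P) (hBpos : 0 < ∑ a ∈ B, P a) {α : ℕ → Ω}
    (hα : MLRandom P α) (hB : B.Nonempty) : MLRandom (condProb P B) (condSeq α B hB) := by
  have hinf := infinite_setOf_mem_of_mlRandom hP hBpos hα
  intro C hC
  obtain ⟨n, hn, hnot⟩ := hα _ (hC.preimage_condList hP hBpos)
  refine ⟨n, hn, fun ⟨τ, hτ, hpre⟩ => hnot <|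
    inOpen_of_seqPrefix_mem (L := Nat.nth (fun m => α m ∈ B) τ.length) ?_⟩
  show (n, condList B (seqPrefix α _)) ∈ C
  rwa [condList_seqPrefix α hB, Nat.count_nth_of_infinite hinf, hpre]

end Conditioning

theorem closure_under_conditioning_general {Ω : Type*} [Fintype Ω] [DecidableEq Ω]
    (P : Ω → ℝ) (hP : IsFPS P) (B : Finset Ω) (hBpos : 0 < ∑ a ∈ B, P a)
    (α : ℕ → Ω) (hα : MLRandom P α) :
    {n : ℕ | α n ∈ B}.Infinite ∧
      ∀ hB : B.Nonempty,
        MLRandom (fun b : {x : Ω // x ∈ B} => P (b : Ω) / ∑ a ∈ B, P a)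
          (condSeq α B hB) :=
  ⟨infinite_setOf_mem_of_mlRandom hP hBpos hα, mlRandom_condSeq hP hBpos hα⟩

/-- closure under conditioning. If `P(B) > 0` and `α` is Martin-Löf
`P`-random, then `α` contains infinitely many elements of `B` (so `α|B` is well defined),
and `α|B` is Martin-Löf `P_B`-random, where `P_B(a) = P(a)/P(B)` for `a ∈ B`. -/
theorem closure_under_conditioning {Ω : Type*} [Fintype Ω] [Nonempty Ω] [DecidableEq Ω]
    (P : Ω → ℝ) (hP : IsFPS P) (B : Finset Ω) (hBpos : 0 < ∑ a ∈ B, P a)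
    (α : ℕ → Ω) (hα : MLRandom P α) :
    {n : ℕ | α n ∈ B}.Infinite ∧
      ∀ hB : B.Nonempty,
        MLRandom (fun b : {x : Ω // x ∈ B} => P (b : Ω) / ∑ a ∈ B, P a)
          (condSeq α B hB) :=
  closure_under_conditioning_general P hP B hBpos α hα

end Paper
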